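/- Let ε ∈ (0,1), t, d ∈ ℕ with t ≥ 1, and let N ⊂ ℝ^d be a finite set satisfying |N|² ≤ e^{ε²·t/16}. For a Gaussian JL map G ∈ ℝ^{t×d}, define the random variable β(G) as the infimum of all β ≥ 0 such that ‖Gu − Gv‖ ≥ (1 − ε − β·ε)·‖u − v‖ for all u, v ∈ N. Then E[ β(G) ] ≤ (8/(ε²·t))·e^{−ε²·t/16}. -/

import Mathlib

open MeasureTheory ProbabilityTheory Metric
open scoped ENNReal NNReal Classical

noncomputable def gaussianJL (t d : ℕ) : Measure (Fin t → Fin d → ℝ) :=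
  Measure.pi fun _ : Fin t => Measure.pi fun _ : Fin d => gaussianReal 0 (t : ℝ≥0)⁻¹

noncomputable def appJL {t d : ℕ} (G : Fin t → Fin d → ℝ)
    (x : EuclideanSpace ℝ (Fin d)) : EuclideanSpace ℝ (Fin t) :=
  WithLp.toLp 2 (fun i => ∑ j, G i j * x j)

noncomputable def nearestDist {d : ℕ} (p : EuclideanSpace ℝ (Fin d))
    (C : Finset (EuclideanSpace ℝ (Fin d))) : ℝ :=
  sInf ((fun c => ‖p - c‖) '' ↑C)

noncomputable def costZ {d : ℕ} (P C : Finset (EuclideanSpace ℝ (Fin d))) (z : ℝ) : ℝ :=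
  ∑ p ∈ P, nearestDist p C ^ z

noncomputable def optZ {d : ℕ} (P Q : Finset (EuclideanSpace ℝ (Fin d))) (k : ℕ) (z : ℝ) : ℝ :=
  sInf {v | ∃ C : Finset (EuclideanSpace ℝ (Fin d)),
    C ⊆ Q ∧ C.Nonempty ∧ C.card ≤ k ∧ v = costZ P C z}

def HasDoublingDim {d : ℕ} (S : Set (EuclideanSpace ℝ (Fin d))) (m : ℝ) : Prop :=
  ∀ x ∈ S, ∀ r > 0, ∃ F : Finset (EuclideanSpace ℝ (Fin d)),
    (F.card : ℝ) ≤ (2 : ℝ) ^ m ∧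
      S ∩ closedBall x r ⊆ ⋃ y ∈ F, closedBall y (r / 2)

/-! Write `x = u - v` for a pair of points of `N`. The rows of `G` are independent and each
coordinate of `G x` is `N(0, ‖x‖² / t)`, so `E exp (-l ‖G x‖²) = (1 + 2 l ‖x‖² / t) ^ (-t/2)`, and
a Chernoff bound gives `P (‖G x‖ < (1 - δ) ‖x‖) ≤ exp (-δ² t / 8)`. The least `β` that works for
the single pair exceeds `s` only if `‖G x‖ < (1 - (1 + s) ε) ‖x‖`, so integrating this tail over
`s > 0` bounds its expectation by `4 / (ε² t) · exp (-ε² t / 8)`. Finally `β(G)` is at most the sum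
of these `|N|²` single-pair quantities, and `|N|² ≤ exp (ε² t / 16)`. -/

open Real

lemma integral_exp_neg_mul_sq_gaussianReal (v : ℝ≥0) {l : ℝ} (hl : 0 ≤ l) :
    ∫ y, exp (-l * y ^ 2) ∂gaussianReal 0 v = (√(1 + 2 * l * v))⁻¹ := by
  rcases eq_or_ne v 0 with rfl | hv
  · simp [gaussianReal_zero_var]
  have hpdf (y : ℝ) : gaussianPDFReal 0 v y • exp (-l * y ^ 2) =
      (√(2 * π * v))⁻¹ * exp (-((2 * (v : ℝ))⁻¹ + l) * y ^ 2) := by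
    rw [gaussianPDFReal, smul_eq_mul, mul_assoc, ← exp_add]
    congr 2
    field_simp
    ring
  simp_rw [integral_gaussianReal_eq_integral_smul hv, hpdf, integral_const_mul, integral_gaussian]
  rw [← sqrt_inv, ← sqrt_inv, ← sqrt_mul (by positivity)]
  congr 1
  field_simp

lemma pi_gaussianReal_map_sum_mul {ι : Type*} [Fintype ι] (v : ℝ≥0) (x : EuclideanSpace ℝ ι) :
    (Measure.pi fun _ : ι => gaussianReal 0 v).map (fun g => ∑ j, g j * x j) =
      gaussianReal 0 (‖x‖₊ ^ 2 * v) := by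
  set P := Measure.pi fun _ : ι => gaussianReal 0 v
  set X : ι → (ι → ℝ) → ℝ := fun j g => g j * x j
  have hlaw (j : ι) : HasLaw (X j) (gaussianReal 0 (⟨x j ^ 2, sq_nonneg _⟩ * v)) P := by
    have h := gaussianReal_mul_const (X := fun g : ι → ℝ => g j) (P := P)
      ⟨(measurable_pi_apply j).aemeasurable, (measurePreserving_eval _ j).map_eq⟩ (x j)
    rwa [mul_zero] at h
  have hindep : iIndepFun X P := iIndepFun_pi (X := fun j (y : ℝ) => y * x j) fun _ => by fun_prop
  have hmean : ∫ g, ∑ j, X j g ∂P = 0 := by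
    rw [integral_finsetSum _ fun j _ => (hlaw j).hasGaussianLaw.integrable]
    simp [(hlaw _).integral_eq]
  have hvar : Var[fun g => ∑ j, X j g; P] = ‖x‖ ^ 2 * v := by
    rw [← Finset.sum_fn, IndepFun.variance_sum (fun j _ => (hlaw j).hasGaussianLaw.memLp_two)
      fun i _ j _ hij => hindep.indepFun hij]
    simp only [(hlaw _).variance_eq, variance_id_gaussianReal, EuclideanSpace.real_norm_sq_eq,
      Finset.sum_mul]
    rfl
  rw [(hindep.hasGaussianLaw_fun_sum fun j => (hlaw j).hasGaussianLaw).map_eq_gaussianReal,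
    hmean, hvar]
  congr
  ext
  simp
  positivity

instance isProbabilityMeasure_gaussianJL (t d : ℕ) : IsProbabilityMeasure (gaussianJL t d) := by
  unfold gaussianJL; infer_instance

@[fun_prop]
lemma continuous_appJL {t d : ℕ} (x : EuclideanSpace ℝ (Fin d)) :
    Continuous fun G : Fin t → Fin d → ℝ => appJL G x :=
  (PiLp.continuous_toLp ..).comp (continuous_pi fun _ => by fun_prop)

lemma appJL_sub {t d : ℕ} (G : Fin t → Fin d → ℝ) (u v : EuclideanSpace ℝ (Fin d)) :
    appJL G u - appJL G v = appJL G (u - v) := by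
  ext i
  simp only [appJL, PiLp.toLp_apply, PiLp.sub_apply, mul_sub, Finset.sum_sub_distrib]

lemma norm_appJL_sq {t d : ℕ} (G : Fin t → Fin d → ℝ) (x : EuclideanSpace ℝ (Fin d)) :
    ‖appJL G x‖ ^ 2 = ∑ i, (∑ j, G i j * x j) ^ 2 := by
  simp [EuclideanSpace.real_norm_sq_eq, appJL]

lemma mgf_norm_appJL_sq {t d : ℕ} (x : EuclideanSpace ℝ (Fin d)) {l : ℝ} (hl : 0 ≤ l) :
    mgf (fun G => ‖appJL G x‖ ^ 2) (gaussianJL t d) (-l) =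
      (√(1 + 2 * l * ‖x‖ ^ 2 / t))⁻¹ ^ t := by
  have hrow : ∫ g, exp (-l * (∑ j, g j * x j) ^ 2)
      ∂(Measure.pi fun _ : Fin d => gaussianReal 0 (t : ℝ≥0)⁻¹) =
        (√(1 + 2 * l * ‖x‖ ^ 2 / t))⁻¹ := by
    rw [← integral_map (φ := fun g : Fin d → ℝ => ∑ j, g j * x j) (f := fun y => exp (-l * y ^ 2))
      (Measurable.aemeasurable (by fun_prop)) (by fun_prop), pi_gaussianReal_map_sum_mul,
      integral_exp_neg_mul_sq_gaussianReal _ hl]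
    simp [div_eq_mul_inv, mul_assoc]
  simp_rw [mgf, norm_appJL_sq, Finset.mul_sum, exp_sum]
  rw [gaussianJL,
    integral_fintype_prod_eq_pow (fun g : Fin d → ℝ => exp (-l * (∑ j, g j * x j) ^ 2)), hrow,
    Fintype.card_fin]

lemma exp_mul_inv_sqrt_le {q : ℝ} (hq0 : 0 < q) (hq1 : q ≤ 1) :
    exp ((1 - q) / 4) * (√((1 + q) / (2 * q)))⁻¹ ≤ exp (-((1 - q) ^ 2 / 8)) := by
  have hy : 0 < (1 + q) / (2 * q) := by positivity
  have hlog : (1 - q) / (1 + q) ≤ log ((1 + q) / (2 * q)) := by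
    convert one_sub_inv_le_log_of_pos hy using 1
    field_simp
    ring
  have hq : (1 - q) / 4 + (1 - q) ^ 2 / 8 ≤ (1 - q) / (1 + q) / 2 := by
    rw [div_div, le_div_iff₀ (by positivity)]
    nlinarith [pow_nonneg (sub_nonneg.2 hq1) 3]
  rw [← exp_log hy, ← exp_half, ← exp_neg, ← exp_add, exp_le_exp]
  linarith

lemma measureReal_norm_appJL_sq_le {t d : ℕ} (ht : 1 ≤ t) {x : EuclideanSpace ℝ (Fin d)}
    (hx : x ≠ 0) {q : ℝ} (hq0 : 0 < q) (hq1 : q ≤ 1) :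
    (gaussianJL t d).real {G | ‖appJL G x‖ ^ 2 ≤ q * ‖x‖ ^ 2} ≤ exp (-((1 - q) ^ 2 * t / 8)) := by
  have hx' : 0 < ‖x‖ := norm_pos_iff.2 hx
  have ht' : (0 : ℝ) < t := by exact_mod_cast ht
  set l := (1 - q) * t / (4 * q * ‖x‖ ^ 2)
  have hl : 0 ≤ l := by have := sub_nonneg.2 hq1; positivity
  have hint : Integrable (fun G => exp (-l * ‖appJL G x‖ ^ 2)) (gaussianJL t d) := by
    refine .of_bound (by fun_prop) 1 (ae_of_all _ fun G => ?_)
    rw [norm_of_nonneg (exp_nonneg _), exp_le_one_iff]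
    have := sq_nonneg ‖appJL G x‖
    nlinarith
  have hexp : l * (q * ‖x‖ ^ 2) = t * ((1 - q) / 4) := by unfold l; field_simp
  have hmgf : 1 + 2 * l * ‖x‖ ^ 2 / t = (1 + q) / (2 * q) := by unfold l; field_simp; ring
  calc (gaussianJL t d).real {G | ‖appJL G x‖ ^ 2 ≤ q * ‖x‖ ^ 2}
      ≤ exp (- -l * (q * ‖x‖ ^ 2)) * mgf (fun G => ‖appJL G x‖ ^ 2) (gaussianJL t d) (-l) :=
        measure_le_le_exp_mul_mgf _ (by linarith) hint
    _ = (exp ((1 - q) / 4) * (√((1 + q) / (2 * q)))⁻¹) ^ t := by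
        rw [mgf_norm_appJL_sq _ hl, neg_neg, hexp, hmgf, exp_nat_mul, mul_pow]
    _ ≤ exp (-((1 - q) ^ 2 / 8)) ^ t := by gcongr; exact exp_mul_inv_sqrt_le hq0 hq1
    _ = exp (-((1 - q) ^ 2 * t / 8)) := by rw [← exp_nat_mul]; ring_nf

lemma measureReal_norm_appJL_lt_le {t d : ℕ} (ht : 1 ≤ t) (x : EuclideanSpace ℝ (Fin d))
    {δ : ℝ} (hδ : 0 ≤ δ) :
    (gaussianJL t d).real {G | ‖appJL G x‖ < (1 - δ) * ‖x‖} ≤ exp (-(δ ^ 2 * t / 8)) := by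
  by_cases hdeg : x = 0 ∨ 1 ≤ δ
  · have hr : (1 - δ) * ‖x‖ ≤ 0 := by
      rcases hdeg with rfl | hδ1
      · simp
      · exact mul_nonpos_of_nonpos_of_nonneg (by linarith) (norm_nonneg x)
    have hempty : {G : Fin t → Fin d → ℝ | ‖appJL G x‖ < (1 - δ) * ‖x‖} = ∅ :=
      Set.eq_empty_of_forall_notMem fun G hG => (norm_nonneg _).not_gt (hG.trans_le hr)
    rw [hempty, measureReal_empty]
    positivity
  obtain ⟨hx, hδ1⟩ : x ≠ 0 ∧ δ < 1 := by simpa [not_or] using hdeg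
  calc (gaussianJL t d).real {G | ‖appJL G x‖ < (1 - δ) * ‖x‖}
      ≤ (gaussianJL t d).real {G | ‖appJL G x‖ ^ 2 ≤ (1 - δ) ^ 2 * ‖x‖ ^ 2} := by
        exact measureReal_mono fun G hG =>
          (pow_le_pow_left₀ (norm_nonneg _) hG.le 2).trans_eq (mul_pow _ _ 2)
    _ ≤ exp (-((1 - (1 - δ) ^ 2) ^ 2 * t / 8)) :=
        measureReal_norm_appJL_sq_le ht hx (by nlinarith) (by nlinarith)
    _ ≤ exp (-(δ ^ 2 * t / 8)) := by
        gcongr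
        nlinarith

/-- The least `β` with `(1 - ε - β ε) ‖x‖ ≤ ‖G x‖` (junk value `0` at `x = 0`). -/
noncomputable def contractionExcess {t d : ℕ} (ε : ℝ) (G : Fin t → Fin d → ℝ)
    (x : EuclideanSpace ℝ (Fin d)) : ℝ :=
  ((1 - ε) * ‖x‖ - ‖appJL G x‖) / (ε * ‖x‖)

section contractionExcess

variable {t d : ℕ} {ε : ℝ} {G : Fin t → Fin d → ℝ} {x : EuclideanSpace ℝ (Fin d)}

lemma le_norm_appJL_of_contractionExcess_le (hε : 0 < ε) {β : ℝ}
    (h : contractionExcess ε G x ≤ β) : (1 - ε - β * ε) * ‖x‖ ≤ ‖appJL G x‖ := by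
  rcases eq_or_ne x 0 with rfl | hx
  · simp
  rw [contractionExcess, div_le_iff₀ (by positivity)] at h
  linarith

lemma norm_appJL_lt_of_lt_contractionExcess (hε : 0 < ε) {s : ℝ} (hs : 0 ≤ s)
    (h : s < contractionExcess ε G x) : ‖appJL G x‖ < (1 - (1 + s) * ε) * ‖x‖ := by
  rcases eq_or_ne x 0 with rfl | hx
  · simp [contractionExcess] at h
    linarith
  rw [contractionExcess, lt_div_iff₀ (by positivity)] at h
  linarith

lemma contractionExcess_le_inv (hε : 0 < ε) : contractionExcess ε G x ≤ ε⁻¹ := by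
  rcases eq_or_ne x 0 with rfl | hx
  · simp [contractionExcess, hε.le]
  rw [contractionExcess, div_le_iff₀ (by positivity), inv_mul_cancel_left₀ hε.ne']
  linarith [norm_nonneg (appJL G x), mul_nonneg hε.le (norm_nonneg x)]

@[fun_prop]
lemma continuous_contractionExcess :
    Continuous fun G : Fin t → Fin d → ℝ => contractionExcess ε G x := by
  unfold contractionExcess
  fun_prop

lemma integrable_max_contractionExcess (hε : 0 < ε) :
    Integrable (fun G => max (contractionExcess ε G x) 0) (gaussianJL t d) :=
  .of_bound (by fun_prop) ε⁻¹ (ae_of_all _ fun G => by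
    rw [norm_of_nonneg (le_max_right _ _)]
    exact max_le (contractionExcess_le_inv hε) (inv_nonneg.2 hε.le))

lemma integral_max_contractionExcess_le (ht : 1 ≤ t) (hε : 0 < ε) :
    ∫ G, max (contractionExcess ε G x) 0 ∂gaussianJL t d ≤
      4 / (ε ^ 2 * t) * exp (-(ε ^ 2 * t / 8)) := by
  have ht' : (0 : ℝ) < t := by exact_mod_cast ht
  have hrate : -(ε ^ 2 * t / 4) < 0 := neg_neg_of_pos (by positivity)
  have htail : ∀ s ∈ Set.Ioi (0 : ℝ),
      (gaussianJL t d).real {G | s < max (contractionExcess ε G x) 0} ≤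
        exp (-(ε ^ 2 * t / 8)) * exp (-(ε ^ 2 * t / 4) * s) := fun s (hs : 0 < s) =>
    calc (gaussianJL t d).real {G | s < max (contractionExcess ε G x) 0}
        ≤ (gaussianJL t d).real {G | ‖appJL G x‖ < (1 - (1 + s) * ε) * ‖x‖} :=
          measureReal_mono fun G hG => norm_appJL_lt_of_lt_contractionExcess hε hs.le
            ((lt_max_iff.1 hG).resolve_right hs.not_gt)
      _ ≤ exp (-(((1 + s) * ε) ^ 2 * t / 8)) := measureReal_norm_appJL_lt_le ht x (by positivity)
      _ ≤ exp (-(ε ^ 2 * t / 8)) * exp (-(ε ^ 2 * t / 4) * s) := by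
          rw [← exp_add, exp_le_exp]
          nlinarith [mul_nonneg (mul_nonneg (sq_nonneg s) (sq_nonneg ε)) ht'.le]
  rw [(integrable_max_contractionExcess hε).integral_eq_integral_meas_lt
    (ae_of_all _ fun _ => le_max_right _ _)]
  calc ∫ s in Set.Ioi 0, (gaussianJL t d).real {G | s < max (contractionExcess ε G x) 0}
      ≤ ∫ s in Set.Ioi 0, exp (-(ε ^ 2 * t / 8)) * exp (-(ε ^ 2 * t / 4) * s) :=
        integral_mono_of_nonneg (ae_of_all _ fun _ => measureReal_nonneg)
          ((integrableOn_exp_mul_Ioi hrate 0).const_mul _)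
          (ae_restrict_of_forall_mem measurableSet_Ioi htail)
    _ = 4 / (ε ^ 2 * t) * exp (-(ε ^ 2 * t / 8)) := by
        rw [integral_const_mul, integral_exp_mul_Ioi hrate 0]
        field_simp
        simp

end contractionExcess

lemma sInf_contraction_le_sum {t d : ℕ} {ε : ℝ} (hε : 0 < ε)
    (N : Finset (EuclideanSpace ℝ (Fin d))) (G : Fin t → Fin d → ℝ) :
    sInf {β : ℝ | 0 ≤ β ∧ ∀ u ∈ N, ∀ v ∈ N,
        (1 - ε - β * ε) * ‖u - v‖ ≤ ‖appJL G u - appJL G v‖} ≤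
      ∑ p ∈ N ×ˢ N, max (contractionExcess ε G (p.1 - p.2)) 0 := by
  refine csInf_le ⟨0, fun β hβ => hβ.1⟩ ?_
  refine ⟨Finset.sum_nonneg fun _ _ => le_max_right _ _, fun u hu v hv => ?_⟩
  rw [appJL_sub]
  refine le_norm_appJL_of_contractionExcess_le hε ((le_max_left _ 0).trans ?_)
  exact Finset.single_le_sum (fun p _ => le_max_right (contractionExcess ε G (p.1 - p.2)) 0)
    (Finset.mem_product.2 ⟨hu, hv⟩ : (u, v) ∈ N ×ˢ N)

/-- Expected maximum contraction over a fixed net N with |N|² ≤ e^{ε²t/16}: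
defining β(G) as the least β ≥ 0 such that all pairwise distances in N contract by at
most a (1 − ε − βε) factor, we have E[β] ≤ (8/(ε²t))·e^{−ε²t/16}. -/
theorem expected_net_contraction_bound {d t : ℕ} (ht : 1 ≤ t)
    (ε : ℝ) (hε : ε ∈ Set.Ioo (0 : ℝ) 1)
    (N : Finset (EuclideanSpace ℝ (Fin d)))
    (hN : ((N.card : ℝ)) ^ 2 ≤ Real.exp (ε ^ 2 * t / 16)) :
    ∫ G, sInf {β : ℝ | 0 ≤ β ∧ ∀ u ∈ N, ∀ v ∈ N,
        (1 - ε - β * ε) * ‖u - v‖ ≤ ‖appJL G u - appJL G v‖} ∂(gaussianJL t d) ≤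
      (8 / (ε ^ 2 * t)) * Real.exp (-(ε ^ 2 * t) / 16) := by
  have hε0 : 0 < ε := hε.1
  calc _ ≤ ∫ G, ∑ p ∈ N ×ˢ N, max (contractionExcess ε G (p.1 - p.2)) 0 ∂(gaussianJL t d) :=
        integral_mono_of_nonneg (ae_of_all _ fun G => Real.sInf_nonneg fun β hβ => hβ.1)
          (integrable_finsetSum _ fun _ _ => integrable_max_contractionExcess hε0)
          (ae_of_all _ (sInf_contraction_le_sum hε0 N))
    _ = ∑ p ∈ N ×ˢ N, ∫ G, max (contractionExcess ε G (p.1 - p.2)) 0 ∂(gaussianJL t d) :=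
        integral_finsetSum _ fun _ _ => integrable_max_contractionExcess hε0
    _ ≤ ∑ _p ∈ N ×ˢ N, 4 / (ε ^ 2 * t) * exp (-(ε ^ 2 * t / 8)) :=
        Finset.sum_le_sum fun _ _ => integral_max_contractionExcess_le ht hε0
    _ = (N.card : ℝ) ^ 2 * (4 / (ε ^ 2 * t) * exp (-(ε ^ 2 * t / 8))) := by
        simp [Finset.card_product, sq]
    _ ≤ exp (ε ^ 2 * t / 16) * (4 / (ε ^ 2 * t) * exp (-(ε ^ 2 * t / 8))) := by gcongr
    _ = 4 / (ε ^ 2 * t) * exp (-(ε ^ 2 * t) / 16) := by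
        rw [mul_left_comm, ← exp_add]
        ring_nf
    _ ≤ 8 / (ε ^ 2 * t) * exp (-(ε ^ 2 * t) / 16) := by gcongr; norm_num
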